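/- Let q be a prime power, n ≥ 2, 1 ≤ m < n, and F = 𝔽_q((t⁻¹)). Let U(𝔽_q) be the finite subgroup of SL_n(F) consisting of all block matrices fromBlocks(1_m, B, 0, 1_{n−m}) where B ranges over the m×(n−m) matrices with entries in 𝔽_q (constants). If g ∈ SL_n(F) normalizes U(𝔽_q), i.e., g·U(𝔽_q)·g⁻¹ = U(𝔽_q), then the lower-left (n−m)×m block of g is zero, i.e., g lies in the block upper-triangular parabolic subgroup P(F). (This is part (i) of the normalizer lemma for a maximal parabolic with abelian unipotent radical, in its type A_{n-1} instance.) -/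

import Mathlib

/-!
If `g` normalizes `U(𝔽_q)`, then for every constant `B` there is a constant `B'` with
`g · fromBlocks(1, B, 0, 1) = fromBlocks(1, B', 0, 1) · g`. Comparing lower-right blocks gives
`C · B = 0` for the lower-left block `C` of `g`, and taking `B` a matrix unit shows `C = 0`.
-/

noncomputable section
open Matrix

variable (Fq : Type) [Field Fq] [Fintype Fq]

/-- `F = 𝔽_q((t⁻¹))`, realized as the field of formal Laurent series over `𝔽_q`
with uniformizer `X = t⁻¹`. -/
abbrev F := LaurentSeries Fq

/-- `U(𝔽_q)`: the block upper unipotent matrices with constant entries. -/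
def Uconst (a b : ℕ) : Set (SpecialLinearGroup (Fin a ⊕ Fin b) (F Fq)) :=
  {u | ∃ B : Matrix (Fin a) (Fin b) Fq,
    (u : Matrix (Fin a ⊕ Fin b) (Fin a ⊕ Fin b) (F Fq)) =
      Matrix.fromBlocks 1 (B.map (HahnSeries.C : Fq →+* F Fq)) 0 1}

section BlockUnipotent

variable {m n R : Type*} [Fintype m] [Fintype n] [DecidableEq m] [DecidableEq n] [Ring R]

theorem toBlocks₂₁_mul_eq_zero_of_mul_fromBlocks_eq
    {g : Matrix (m ⊕ n) (m ⊕ n) R} {B B' : Matrix m n R}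
    (h : g * fromBlocks 1 B 0 1 = fromBlocks 1 B' 0 1 * g) :
    g.toBlocks₂₁ * B = 0 := by
  have h₂₂ := congrArg toBlocks₂₂ h
  rw [← fromBlocks_toBlocks g, fromBlocks_multiply, fromBlocks_multiply] at h₂₂
  simpa using h₂₂

end BlockUnipotent

omit [Fintype Fq] in
def Uconst.ofMatrix {a b : ℕ} (B : Matrix (Fin a) (Fin b) Fq) :
    SpecialLinearGroup (Fin a ⊕ Fin b) (F Fq) :=
  ⟨fromBlocks 1 (B.map (HahnSeries.C : Fq →+* F Fq)) 0 1, by simp⟩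

omit [Fintype Fq] in
theorem Uconst.ofMatrix_mem {a b : ℕ} (B : Matrix (Fin a) (Fin b) Fq) :
    Uconst.ofMatrix Fq B ∈ Uconst Fq a b :=
  ⟨B, rfl⟩

theorem normalizer_of_Uconst_subset_parabolic
    (a b : ℕ)
    (g : SpecialLinearGroup (Fin a ⊕ Fin b) (F Fq))
    (hg : (fun u : SpecialLinearGroup (Fin a ⊕ Fin b) (F Fq) => g * u * g⁻¹) '' Uconst Fq a b
      = Uconst Fq a b) :
    ∀ (i : Fin b) (j : Fin a),
      (g : Matrix (Fin a ⊕ Fin b) (Fin a ⊕ Fin b) (F Fq)) (Sum.inr i) (Sum.inl j) = 0 := by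
  intro i j
  let u : SpecialLinearGroup (Fin a ⊕ Fin b) (F Fq) := Uconst.ofMatrix Fq (single j i 1)
  obtain ⟨B', hB'⟩ : g * u * g⁻¹ ∈ Uconst Fq a b := hg ▸ ⟨u, Uconst.ofMatrix_mem Fq _, rfl⟩
  have hcomm : (g : Matrix (Fin a ⊕ Fin b) (Fin a ⊕ Fin b) (F Fq)) * (u : Matrix _ _ _) =
      fromBlocks 1 (B'.map (HahnSeries.C : Fq →+* F Fq)) 0 1 * (g : Matrix _ _ _) := by
    rw [← hB']
    exact congrArg Subtype.val (inv_mul_cancel_right (g * u) g).symm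
  have hzero := congrFun₂ (toBlocks₂₁_mul_eq_zero_of_mul_fromBlocks_eq hcomm) i i
  simpa [u, Uconst.ofMatrix, toBlocks₂₁] using hzero
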